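/- arXiv:1109.2749 — 8 statements merged into one kernel-verified Lean document; each statement's English description precedes it below -/
import Mathlib

section
/- Let K ≥ 1 and let A be a real symmetric 2×2 matrix satisfying K⁻¹‖ξ‖² ≤ ⟨ξ, A ξ⟩ ≤ K‖ξ‖² for all ξ ∈ ℝ². Then for every p > 0 and every ξ ∈ ℝ²: ‖ξ‖²/log(e + ‖ξ‖²) + ‖Aξ‖²/log(e + ‖Aξ‖²) ≤ (2/p)·(⟨ξ, A ξ⟩ + e^{pK}). -/
open scoped RealInnerProductSpace

/-- For `t ≥ 0`, `log (e + t) ≥ 1`. -/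
lemma one_le_log_e_add (t : ℝ) (ht : 0 ≤ t) : 1 ≤ Real.log (Real.exp 1 + t) := by
  have := Real.log_le_log (Real.exp_pos 1) (by linarith : Real.exp 1 ≤ Real.exp 1 + t)
  simpa [Real.log_exp] using this

/-- Key elementary inequality: for `a ≥ 1`, `t ≥ 0`, `a·t ≤ (t + eᵃ)·log(e + t)`. -/
lemma key_log_ineq (a t : ℝ) (ha : 1 ≤ a) (ht : 0 ≤ t) :
    a * t ≤ (t + Real.exp a) * Real.log (Real.exp 1 + t) := by
  set u := Real.log (Real.exp 1 + t) with hu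
  have hpos : (0:ℝ) < Real.exp 1 + t := by positivity
  have hu1 : 1 ≤ u := one_le_log_e_add t ht
  have hexp_u : Real.exp u = Real.exp 1 + t := Real.exp_log hpos
  rcases le_or_gt a u with h | h
  · have : a * t ≤ u * t := by nlinarith
    nlinarith [Real.exp_pos a]
  · have h1 : t ≤ Real.exp u := by nlinarith [Real.exp_pos 1]
    have h2 : a - u ≤ Real.exp (a - u) := by
      nlinarith [Real.add_one_le_exp (a - u)]
    have h3 : (a - u) * Real.exp u ≤ Real.exp a := by
      have := mul_le_mul_of_nonneg_right h2 (Real.exp_pos u).le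
      rwa [← Real.exp_add, sub_add_cancel] at this
    nlinarith [Real.exp_pos a, Real.exp_pos u]

lemma term_bound (K p q t : ℝ) (hK : 1 ≤ K) (hp : 0 < p) (hq : 0 ≤ q)
    (ht0 : 0 ≤ t) (ht : t ≤ K * q) :
    t / Real.log (Real.exp 1 + t) ≤ (q + Real.exp (p * K)) / p := by
  set a := max (p * K) 1 with ha
  have ha1 : 1 ≤ a := le_max_right _ _
  have hlogpos : 0 < Real.log (Real.exp 1 + t) := by
    linarith [one_le_log_e_add t ht0]
  have key := key_log_ineq a t ha1 ht0
  have h1 : t / Real.log (Real.exp 1 + t) ≤ (t + Real.exp a) / a := by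
    rw [div_le_div_iff₀ hlogpos (by linarith : (0:ℝ) < a)]
    linarith [key]
  refine h1.trans ?_
  rw [div_le_div_iff₀ (by linarith : (0:ℝ) < a) hp]
  rcases le_total 1 (p * K) with hpk | hpk
  · have haeq : a = p * K := max_eq_left hpk
    rw [haeq]
    have h2 : p * t ≤ p * (K * q) := by nlinarith
    have hppK : p ≤ p * K := by nlinarith
    have h3 : Real.exp (p * K) * p ≤ Real.exp (p * K) * (p * K) :=
      mul_le_mul_of_nonneg_left hppK (Real.exp_pos _).le
    nlinarith
  · have haeq : a = 1 := max_eq_right hpk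
    rw [haeq]
    have h2 : p * Real.exp 1 ≤ Real.exp (p * K) := by
      have h3 : p * K ≤ Real.exp (p * K - 1) := by
        nlinarith [Real.add_one_le_exp (p * K - 1)]
      have h4 : p * K * Real.exp 1 ≤ Real.exp (p * K) := by
        have := mul_le_mul_of_nonneg_right h3 (Real.exp_pos 1).le
        rwa [← Real.exp_add, sub_add_cancel] at this
      have hpk2 : p ≤ p * K := by nlinarith
      have hppK : p * Real.exp 1 ≤ p * K * Real.exp 1 :=
        mul_le_mul_of_nonneg_right hpk2 (Real.exp_pos 1).le
      linarith
    have h5 : p * t ≤ p * (K * q) := by nlinarith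
    nlinarith

/-- Let `K ≥ 1` and let `A` be a real symmetric `2×2` matrix satisfying
`K⁻¹‖ξ‖² ≤ ⟨ξ, A ξ⟩ ≤ K‖ξ‖²` for all `ξ ∈ ℝ²`. Then for every `p > 0` and every `ξ ∈ ℝ²`:
`‖ξ‖²/log(e + ‖ξ‖²) + ‖Aξ‖²/log(e + ‖Aξ‖²) ≤ (2/p)·(⟨ξ, A ξ⟩ + e^{pK})`. -/
theorem key_elementary_inequality
    (K : ℝ) (hK : 1 ≤ K) (A : Matrix (Fin 2) (Fin 2) ℝ) (hA : A.IsSymm)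
    (hbound : ∀ (ξ : EuclideanSpace ℝ (Fin 2)),
        K⁻¹ * ‖ξ‖ ^ 2 ≤ ⟪ξ, Matrix.toEuclideanLin A ξ⟫ ∧
        ⟪ξ, Matrix.toEuclideanLin A ξ⟫ ≤ K * ‖ξ‖ ^ 2)
    (p : ℝ) (hp : 0 < p) (ξ : EuclideanSpace ℝ (Fin 2)) :
    ‖ξ‖ ^ 2 / Real.log (Real.exp 1 + ‖ξ‖ ^ 2)
      + ‖Matrix.toEuclideanLin A ξ‖ ^ 2
        / Real.log (Real.exp 1 + ‖Matrix.toEuclideanLin A ξ‖ ^ 2)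
      ≤ (2 / p) * (⟪ξ, Matrix.toEuclideanLin A ξ⟫ + Real.exp (p * K)) := by
  set f := Matrix.toEuclideanLin A with hf
  have hherm : A.IsHermitian := by
    rwa [Matrix.IsHermitian, Matrix.conjTranspose_eq_transpose_of_trivial]
  have hsymm : f.IsSymmetric := Matrix.isHermitian_iff_isSymmetric.mp hherm
  set q := ⟪ξ, f ξ⟫ with hqdef
  have hK0 : (0:ℝ) < K := by linarith
  have hq0 : 0 ≤ q := le_trans (by positivity) (hbound ξ).1
  have ht1 : ‖ξ‖ ^ 2 ≤ K * q := by
    have := (hbound ξ).1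
    rw [inv_mul_le_iff₀ hK0] at this
    linarith
  have ht2 : ‖f ξ‖ ^ 2 ≤ K * q := by
    rcases eq_or_lt_of_le hq0 with hq | hq
    · have hKq : K * q = 0 := by rw [← hq, mul_zero]
      rw [hKq] at ht1
      have hnorm : ‖ξ‖ = 0 := by nlinarith [norm_nonneg ξ]
      have hxi : ξ = 0 := norm_eq_zero.mp hnorm
      rw [hxi, map_zero, hKq]
      simp
    · have hc : ⟪f ξ, f ξ⟫ = ‖f ξ‖ ^ 2 := real_inner_self_eq_norm_sq _
      set t : ℝ := -(‖f ξ‖ ^ 2) / q with htdef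
      have hquad : 0 ≤ ⟪f ξ + t • ξ, f (f ξ + t • ξ)⟫ :=
        le_trans (by positivity) (hbound (f ξ + t • ξ)).1
      have hexpand : ⟪f ξ + t • ξ, f (f ξ + t • ξ)⟫
          = ⟪f ξ, f (f ξ)⟫ + 2 * t * ‖f ξ‖ ^ 2 + t ^ 2 * q := by
        rw [map_add, map_smul, inner_add_left, inner_add_right, inner_add_right,
          real_inner_smul_left, real_inner_smul_left, real_inner_smul_right,
          real_inner_smul_right, ← hsymm ξ (f ξ), hc, ← hqdef]
        ring
      rw [hexpand] at hquad
      have htq : t * q = -(‖f ξ‖ ^ 2) := by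
        rw [htdef]
        field_simp
      have hAx : ⟪f ξ, f (f ξ)⟫ ≤ K * ‖f ξ‖ ^ 2 := (hbound (f ξ)).2
      have key2 : (‖f ξ‖ ^ 2) ^ 2 ≤ ⟪f ξ, f (f ξ)⟫ * q := by
        nlinarith [mul_nonneg hq.le hquad, htq]
      have key3 : (‖f ξ‖ ^ 2) ^ 2 ≤ K * ‖f ξ‖ ^ 2 * q := by
        nlinarith [mul_le_mul_of_nonneg_right hAx hq.le]
      nlinarith [sq_nonneg (‖f ξ‖ ^ 2), norm_nonneg (f ξ), sq_nonneg (K * q - ‖f ξ‖ ^ 2),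
        mul_nonneg hK0.le hq0]
  have h1 := term_bound K p q (‖ξ‖ ^ 2) hK hp hq0 (by positivity) ht1
  have h2 := term_bound K p q (‖f ξ‖ ^ 2) hK hp hq0 (by positivity) ht2
  have heq : (2 / p) * (q + Real.exp (p * K))
      = (q + Real.exp (p * K)) / p + (q + Real.exp (p * K)) / p := by ring
  rw [heq]
  exact add_le_add h1 h2
end

section
/- Let 𝒜 : [1,∞) → [0,∞) be a strictly increasing continuous bijection with 𝒜(1) = 0, with inverse 𝒜⁻¹ : [0,∞) → [1,∞), and define P(t) = t² for 0 ≤ t < 1 and P(t) = t²/𝒜⁻¹(log(t²)) for t ≥ 1. Then for every real symmetric positive definite 2×2 matrix σ and every ξ ∈ ℝ²: P(‖ξ‖) + P(‖σξ‖) ≤ 2·exp(𝒜(tr σ + tr σ⁻¹)) + 2·⟨ξ, σ ξ⟩. -/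
/-!
Put `q = ⟪ξ, σ ξ⟫` and `M = tr σ + tr σ⁻¹`. For a symmetric `2 × 2` matrix, Cayley–Hamilton
gives `‖σ ξ‖² + det σ · ‖ξ‖² = tr σ · q`; since `tr σ⁻¹ = tr σ / det σ`, both `‖ξ‖²` and
`‖σ ξ‖²` are at most `M q`, and `M ≥ 4` by AM–GM. It remains to see that `t² ≤ M s` forces
`P t ≤ exp (𝒜 M) + s`: either `t² ≤ exp (𝒜 M)`, and `P t ≤ t²`, or `log t² > 𝒜 M`, so
`𝒜⁻¹ (log t²) ≥ M` and `P t ≤ t² / M ≤ s`.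
-/

open scoped RealInnerProductSpace
open Set

namespace Matrix

theorem trace_inv_fin_two {K : Type*} [Field K] (A : Matrix (Fin 2) (Fin 2) K) :
    A⁻¹.trace = A.trace / A.det := by
  rw [inv_def, trace_smul, adjugate_fin_two, Ring.inverse_eq_inv']
  simp [trace_fin_two, div_eq_inv_mul, add_comm]

theorem mul_self_fin_two {R : Type*} [CommRing R] (A : Matrix (Fin 2) (Fin 2) R) :
    A * A = A.trace • A - A.det • 1 := by
  ext i j
  fin_cases i <;> fin_cases j <;> simp [mul_apply, trace_fin_two, det_fin_two] <;> ring

variable {σ : Matrix (Fin 2) (Fin 2) ℝ}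

theorem IsHermitian.four_mul_det_le_trace_sq (hσ : σ.IsHermitian) : 4 * σ.det ≤ σ.trace ^ 2 := by
  have hsymm : σ 1 0 = σ 0 1 := by simpa using congrFun (congrFun hσ 0) 1
  rw [det_fin_two, trace_fin_two, hsymm]
  nlinarith [sq_nonneg (σ 0 0 - σ 1 1), sq_nonneg (σ 0 1)]

theorem PosDef.four_le_trace_add_trace_inv (hσ : σ.PosDef) : 4 ≤ σ.trace + σ⁻¹.trace := by
  have hT := hσ.trace_pos
  have hD := hσ.det_pos
  have hTD := hσ.isHermitian.four_mul_det_le_trace_sq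
  -- `tr σ ≥ 2 √(det σ)` and `det σ + 1 ≥ 2 √(det σ)`, multiplied after squaring
  have hsq : (4 * σ.det) ^ 2 ≤ (σ.trace * (σ.det + 1)) ^ 2 := by
    nlinarith [sq_nonneg (σ.det - 1), mul_nonneg hD.le (sq_nonneg (σ.det - 1))]
  have hmul : 4 * σ.det ≤ σ.trace * (σ.det + 1) :=
    (pow_le_pow_iff_left₀ (by positivity) (by positivity) two_ne_zero).mp hsq
  rw [trace_inv_fin_two, show σ.trace + σ.trace / σ.det = σ.trace * (σ.det + 1) / σ.det by
    field_simp, le_div_iff₀ hD]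
  exact hmul

theorem IsHermitian.norm_toEuclideanLin_sq_add_det_mul (hσ : σ.IsHermitian)
    (ξ : EuclideanSpace ℝ (Fin 2)) :
    ‖toEuclideanLin σ ξ‖ ^ 2 + σ.det * ‖ξ‖ ^ 2 = σ.trace * ⟪ξ, toEuclideanLin σ ξ⟫ := by
  have hsq : toEuclideanLin (σ * σ) ξ = toEuclideanLin σ (toEuclideanLin σ ξ) := by
    simp [toLpLin_mul_same]
  rw [← real_inner_self_eq_norm_sq, ← real_inner_self_eq_norm_sq,
    isSymmetric_toEuclideanLin_iff.mpr hσ, ← hsq, mul_self_fin_two]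
  simp [inner_sub_right, inner_smul_right]

theorem PosSemidef.inner_toEuclideanLin_nonneg (hσ : σ.PosSemidef) (ξ : EuclideanSpace ℝ (Fin 2)) :
    0 ≤ ⟪ξ, toEuclideanLin σ ξ⟫ :=
  (isPositive_toEuclideanLin_iff.mpr hσ).inner_nonneg_right ξ

theorem PosSemidef.norm_toEuclideanLin_sq_le (hσ : σ.PosSemidef) (ξ : EuclideanSpace ℝ (Fin 2)) :
    ‖toEuclideanLin σ ξ‖ ^ 2 ≤ σ.trace * ⟪ξ, toEuclideanLin σ ξ⟫ := by
  rw [← hσ.isHermitian.norm_toEuclideanLin_sq_add_det_mul]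
  exact le_add_of_nonneg_right (mul_nonneg hσ.det_nonneg (sq_nonneg _))

theorem PosDef.norm_sq_le_trace_inv_mul (hσ : σ.PosDef) (ξ : EuclideanSpace ℝ (Fin 2)) :
    ‖ξ‖ ^ 2 ≤ σ⁻¹.trace * ⟪ξ, toEuclideanLin σ ξ⟫ := by
  have hD := hσ.det_pos
  rw [trace_inv_fin_two, div_mul_eq_mul_div, le_div_iff₀ hD,
    ← hσ.isHermitian.norm_toEuclideanLin_sq_add_det_mul]
  rw [mul_comm]
  exact le_add_of_nonneg_left (sq_nonneg _)

end Matrix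

section Gauge

variable {𝒜 B P : ℝ → ℝ}

theorem gauge_le_sq (hB : MapsTo B (Ici 0) (Ici 1))
    (hPlt : ∀ t : ℝ, 0 ≤ t → t < 1 → P t = t ^ 2)
    (hPge : ∀ t : ℝ, 1 ≤ t → P t = t ^ 2 / B (Real.log (t ^ 2))) {t : ℝ} (ht : 0 ≤ t) :
    P t ≤ t ^ 2 := by
  rcases lt_or_ge t 1 with ht1 | ht1
  · exact (hPlt t ht ht1).le
  · rw [hPge t ht1]
    exact div_le_self (sq_nonneg t) (hB (Real.log_nonneg (one_le_pow₀ ht1)))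

theorem gauge_le_sq_div (h𝒜 : StrictMonoOn 𝒜 (Ici 1)) (hB : MapsTo B (Ici 0) (Ici 1))
    (h𝒜B : RightInvOn B 𝒜 (Ici 0))
    (hPge : ∀ t : ℝ, 1 ≤ t → P t = t ^ 2 / B (Real.log (t ^ 2)))
    {M t : ℝ} (hM : 1 ≤ M) (ht : 1 ≤ t) (h : 𝒜 M < Real.log (t ^ 2)) :
    P t ≤ t ^ 2 / M := by
  have hlog : Real.log (t ^ 2) ∈ Ici 0 := Real.log_nonneg (one_le_pow₀ ht)
  have hMB : M < B (Real.log (t ^ 2)) := by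
    rwa [← h𝒜.lt_iff_lt (mem_Ici.mpr hM) (hB hlog), h𝒜B hlog]
  rw [hPge t ht]
  exact div_le_div_of_nonneg_left (sq_nonneg t) (by linarith) hMB.le

theorem gauge_le_exp_add (h𝒜 : StrictMonoOn 𝒜 (Ici 1)) (h𝒜0 : MapsTo 𝒜 (Ici 1) (Ici 0))
    (hB : MapsTo B (Ici 0) (Ici 1)) (h𝒜B : RightInvOn B 𝒜 (Ici 0))
    (hPlt : ∀ t : ℝ, 0 ≤ t → t < 1 → P t = t ^ 2)
    (hPge : ∀ t : ℝ, 1 ≤ t → P t = t ^ 2 / B (Real.log (t ^ 2)))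
    {M s t : ℝ} (hM : 1 ≤ M) (ht : 0 ≤ t) (h : t ^ 2 ≤ M * s) :
    P t ≤ Real.exp (𝒜 M) + s := by
  have hs : 0 ≤ s := nonneg_of_mul_nonneg_right ((sq_nonneg t).trans h) (by linarith)
  rcases le_or_gt (t ^ 2) (Real.exp (𝒜 M)) with hsmall | hlarge
  · linarith [gauge_le_sq hB hPlt hPge ht]
  · have hexp : 1 ≤ Real.exp (𝒜 M) := Real.one_le_exp (h𝒜0 (mem_Ici.mpr hM))
    have ht1 : 1 ≤ t := by nlinarith
    have hlog : 𝒜 M < Real.log (t ^ 2) := (Real.lt_log_iff_exp_lt (by positivity)).mpr hlarge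
    calc P t ≤ t ^ 2 / M := gauge_le_sq_div h𝒜 hB h𝒜B hPge hM ht1 hlog
      _ ≤ s := (div_le_iff₀' (by linarith)).mpr h
      _ ≤ Real.exp (𝒜 M) + s := le_add_of_nonneg_left (Real.exp_nonneg _)

end Gauge

theorem pointwise_gauge_estimate_general
    (𝒜 B : ℝ → ℝ)
    (h𝒜mono : StrictMonoOn 𝒜 (Set.Ici 1))
    (h𝒜bij : Set.BijOn 𝒜 (Set.Ici 1) (Set.Ici 0))
    (hBinv : Set.InvOn B 𝒜 (Set.Ici 1) (Set.Ici 0))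
    (P : ℝ → ℝ)
    (hPlt : ∀ t : ℝ, 0 ≤ t → t < 1 → P t = t ^ 2)
    (hPge : ∀ t : ℝ, 1 ≤ t → P t = t ^ 2 / B (Real.log (t ^ 2)))
    (σ : Matrix (Fin 2) (Fin 2) ℝ) (hpd : σ.PosDef)
    (ξ : EuclideanSpace ℝ (Fin 2)) :
    P ‖ξ‖ + P ‖Matrix.toEuclideanLin σ ξ‖
      ≤ 2 * Real.exp (𝒜 (σ.trace + σ⁻¹.trace))
        + 2 * ⟪ξ, Matrix.toEuclideanLin σ ξ⟫ := by
  set M := σ.trace + σ⁻¹.trace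
  set q := ⟪ξ, Matrix.toEuclideanLin σ ξ⟫
  have hM : 1 ≤ M := by linarith [hpd.four_le_trace_add_trace_inv]
  have key {t : ℝ} (ht : 0 ≤ t) (h : t ^ 2 ≤ M * q) : P t ≤ Real.exp (𝒜 M) + q :=
    gauge_le_exp_add h𝒜mono h𝒜bij.mapsTo (hBinv.1.mapsTo h𝒜bij.surjOn) hBinv.2 hPlt hPge hM ht h
  have hq : 0 ≤ q := hpd.posSemidef.inner_toEuclideanLin_nonneg ξ
  have hξ : ‖ξ‖ ^ 2 ≤ M * q := (hpd.norm_sq_le_trace_inv_mul ξ).trans <| by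
    rw [add_mul]; exact le_add_of_nonneg_left (mul_nonneg hpd.posSemidef.trace_nonneg hq)
  have hσξ : ‖Matrix.toEuclideanLin σ ξ‖ ^ 2 ≤ M * q :=
    (hpd.posSemidef.norm_toEuclideanLin_sq_le ξ).trans <| by
      rw [add_mul]; exact le_add_of_nonneg_right (mul_nonneg hpd.inv.posSemidef.trace_nonneg hq)
  calc P ‖ξ‖ + P ‖Matrix.toEuclideanLin σ ξ‖
      ≤ (Real.exp (𝒜 M) + q) + (Real.exp (𝒜 M) + q) :=
        add_le_add (key (norm_nonneg _) hξ) (key (norm_nonneg _) hσξ)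
    _ = 2 * Real.exp (𝒜 M) + 2 * q := by ring

/-- Let `𝒜 : [1,∞) → [0,∞)` be a strictly increasing continuous bijection
with `𝒜(1) = 0`, with inverse `B = 𝒜⁻¹ : [0,∞) → [1,∞)`, and define `P(t) = t²` for
`0 ≤ t < 1` and `P(t) = t²/𝒜⁻¹(log(t²))` for `t ≥ 1`. Then for every real symmetric positive
definite `2×2` matrix `σ` and every `ξ ∈ ℝ²`:
`P(‖ξ‖) + P(‖σξ‖) ≤ 2·exp(𝒜(tr σ + tr σ⁻¹)) + 2·⟨ξ, σ ξ⟩`. -/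
theorem pointwise_gauge_estimate
    (𝒜 B : ℝ → ℝ)
    (h𝒜mono : StrictMonoOn 𝒜 (Set.Ici 1))
    (h𝒜cont : ContinuousOn 𝒜 (Set.Ici 1))
    (h𝒜bij : Set.BijOn 𝒜 (Set.Ici 1) (Set.Ici 0))
    (h𝒜1 : 𝒜 1 = 0)
    (hBinv : Set.InvOn B 𝒜 (Set.Ici 1) (Set.Ici 0))
    (P : ℝ → ℝ)
    (hPlt : ∀ t : ℝ, 0 ≤ t → t < 1 → P t = t ^ 2)
    (hPge : ∀ t : ℝ, 1 ≤ t → P t = t ^ 2 / B (Real.log (t ^ 2)))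
    (σ : Matrix (Fin 2) (Fin 2) ℝ) (hsym : σ.IsSymm) (hpd : σ.PosDef)
    (ξ : EuclideanSpace ℝ (Fin 2)) :
    P ‖ξ‖ + P ‖Matrix.toEuclideanLin σ ξ‖
      ≤ 2 * Real.exp (𝒜 (σ.trace + σ⁻¹.trace))
        + 2 * ⟪ξ, Matrix.toEuclideanLin σ ξ⟫ :=
  pointwise_gauge_estimate_general 𝒜 B h𝒜mono h𝒜bij hBinv P hPlt hPge σ hpd ξ
end

section
/- Let 𝒜 : [1,∞) → [0,∞) be a strictly increasing continuous bijection with 𝒜(1) = 0, with inverse 𝒜⁻¹ : [0,∞) → [1,∞), and define P(t) = t² for 0 ≤ t < 1 and P(t) = t²/𝒜⁻¹(log(t²)) for t ≥ 1. Then for all real numbers a ≥ 1, b ≥ 0 and t ≥ 0 with t² ≤ a·b, one has P(t) ≤ b + exp(𝒜(a)). -/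
/-- With the gauge `P` built from the weight `𝒜` as before
(`P(t) = t²` for `0 ≤ t < 1`, `P(t) = t²/𝒜⁻¹(log(t²))` for `t ≥ 1`), for all real
`a ≥ 1`, `b ≥ 0` and `t ≥ 0` with `t² ≤ a·b`, one has `P(t) ≤ b + exp(𝒜(a))`. -/
theorem gauge_key_inequality
    (𝒜 B : ℝ → ℝ)
    (h𝒜mono : StrictMonoOn 𝒜 (Set.Ici 1))
    (h𝒜cont : ContinuousOn 𝒜 (Set.Ici 1))
    (h𝒜bij : Set.BijOn 𝒜 (Set.Ici 1) (Set.Ici 0))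
    (h𝒜1 : 𝒜 1 = 0)
    (hBinv : Set.InvOn B 𝒜 (Set.Ici 1) (Set.Ici 0))
    (P : ℝ → ℝ)
    (hPlt : ∀ t : ℝ, 0 ≤ t → t < 1 → P t = t ^ 2)
    (hPge : ∀ t : ℝ, 1 ≤ t → P t = t ^ 2 / B (Real.log (t ^ 2)))
    (a b t : ℝ) (ha : 1 ≤ a) (hb : 0 ≤ b) (ht : 0 ≤ t) (htab : t ^ 2 ≤ a * b) :
    P t ≤ b + Real.exp (𝒜 a) := by
  have ha0 : (0:ℝ) ≤ 𝒜 a := by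
    have := h𝒜bij.mapsTo (Set.mem_Ici.mpr ha)
    simpa using this
  rcases lt_or_ge t 1 with h1 | h1
  · have hPt : P t = t ^ 2 := hPlt t ht h1
    have ht2 : t ^ 2 ≤ 1 := by nlinarith
    have : (1:ℝ) ≤ Real.exp (𝒜 a) := by
      calc (1:ℝ) = Real.exp 0 := by simp
        _ ≤ Real.exp (𝒜 a) := Real.exp_le_exp.mpr ha0
    linarith [hPt ▸ (ht2.trans this)]
  · have hPt : P t = t ^ 2 / B (Real.log (t ^ 2)) := hPge t h1
    have ht2pos : (1:ℝ) ≤ t ^ 2 := by nlinarith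
    have hlog0 : 0 ≤ Real.log (t ^ 2) := Real.log_nonneg ht2pos
    obtain ⟨s, hs, hAs⟩ := h𝒜bij.surjOn (Set.mem_Ici.mpr hlog0)
    have hs1 : (1:ℝ) ≤ s := hs
    have hBs : B (Real.log (t ^ 2)) = s := by
      have := hBinv.1 hs
      rw [hAs] at this; exact this
    rw [hPt, hBs]
    rcases le_or_gt (t ^ 2) (Real.exp (𝒜 a)) with hc | hc
    · have : t ^ 2 / s ≤ t ^ 2 :=
        div_le_self (by positivity) hs1
      linarith
    · have hlog : 𝒜 a < Real.log (t ^ 2) := by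
        exact (Real.lt_log_iff_exp_lt (x := 𝒜 a) (by positivity : (0:ℝ) < t ^ 2)).mpr hc
      have hsa : a < s := by
        by_contra h
        push_neg at h
        have : 𝒜 s ≤ 𝒜 a := by
          rcases eq_or_lt_of_le h with h' | h'
          · exact le_of_eq (by rw [h'])
          · exact le_of_lt (h𝒜mono hs (Set.mem_Ici.mpr ha) h')
        rw [hAs] at this
        linarith
      have h1 : t ^ 2 / s ≤ t ^ 2 / a :=
        div_le_div_of_nonneg_left (by positivity) (by linarith) hsa.le
      have h2 : t ^ 2 / a ≤ b := by
        rw [div_le_iff₀ (by linarith : (0:ℝ) < a)]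
        linarith [htab]
      have := Real.exp_pos (𝒜 a)
      linarith
end

section
/- Let 𝒜 : [1,∞) → [0,∞) be a strictly increasing continuously differentiable bijection with 𝒜(1) = 0, with inverse 𝒜⁻¹ : [0,∞) → [1,∞), and define P(t) = t²/𝒜⁻¹(log(t²)) for t ≥ 1. Then the integral ∫₁^∞ P(t)/t³ dt is infinite if and only if the integral ∫₁^∞ 𝒜(t)/t² dt is infinite. -/
open MeasureTheory

/-!
Substituting `t = exp (u / 2)` turns `∫₁^∞ P(t)/t³ dt` into `½ ∫₀^∞ du / 𝒜⁻¹(u)`. On the other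
hand, by the layer cake formula for the measure `dt / t²` on `[1, ∞)`, whose superlevel sets
`{𝒜 ≥ u} = [𝒜⁻¹(u), ∞)` have mass `1 / 𝒜⁻¹(u)`, `∫₁^∞ 𝒜(t)/t² dt = ∫₀^∞ du / 𝒜⁻¹(u)`.
Hence the two integrals differ exactly by the factor `½`.
-/

open Set Real
open scoped ENNReal

theorem StrictMonoOn.le_apply_iff_of_rightInvOn {α β : Type*} [LinearOrder α] [Preorder β]
    {f : α → β} {g : β → α} {s : Set α} {t : Set β} (hf : StrictMonoOn f s)
    (hfg : RightInvOn g f t) (hg : MapsTo g t s) {x : α} {y : β} (hx : x ∈ s) (hy : y ∈ t) :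
    y ≤ f x ↔ g y ≤ x := by
  calc y ≤ f x ↔ f (g y) ≤ f x := by rw [hfg hy]
    _ ↔ g y ≤ x := hf.le_iff_le (hg hy) hx

theorem lintegral_Ici_ofReal_one_div_sq {a : ℝ} (ha : 0 < a) :
    ∫⁻ t in Ici a, ENNReal.ofReal (1 / t ^ 2) = ENNReal.ofReal (1 / a) := by
  have hrpow : EqOn (fun t : ℝ => t ^ (-2 : ℝ)) (fun t => 1 / t ^ 2) (Ioi a) := fun t ht => by
    dsimp only
    rw [rpow_neg (ha.trans ht).le, one_div, Real.rpow_ofNat]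
  have hint : IntegrableOn (fun t : ℝ => 1 / t ^ 2) (Ioi a) :=
    (integrableOn_Ioi_rpow_of_lt (by norm_num) ha).congr_fun hrpow measurableSet_Ioi
  rw [← Measure.restrict_congr_set Ioi_ae_eq_Ici,
    ← ofReal_integral_eq_lintegral_ofReal hint (.of_forall fun t => by positivity),
    ← setIntegral_congr_fun measurableSet_Ioi hrpow, integral_Ioi_rpow_of_lt (by norm_num) ha]
  norm_num [Real.rpow_neg_one]

theorem lintegral_Ici_one_eq_lintegral_exp_half (g : ℝ → ℝ≥0∞) :
    ∫⁻ t in Ici (1 : ℝ), g t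
      = ∫⁻ u in Ici 0, ENNReal.ofReal (exp (u / 2) / 2) * g (exp (u / 2)) := by
  have himage : (fun u => exp (u / 2)) '' Ici 0 = Ici 1 := by
    ext t
    refine ⟨?_, fun (ht : 1 ≤ t) => ⟨2 * log t, by simp [log_nonneg ht], ?_⟩⟩
    · rintro ⟨u, hu : 0 ≤ u, rfl⟩
      exact one_le_exp (by linarith)
    · simp [exp_log (zero_lt_one.trans_le ht)]
  have hderiv : ∀ u ∈ Ici (0 : ℝ),
      HasDerivWithinAt (fun u => exp (u / 2)) (exp (u / 2) / 2) (Ici 0) u := fun u _ => by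
    simpa [div_eq_mul_inv] using ((hasDerivAt_id u).div_const 2).exp.hasDerivWithinAt
  have hinj : InjOn (fun u => exp (u / 2)) (Ici 0) := fun a _ b _ h => by
    simpa using exp_injective h
  rw [← himage, lintegral_image_eq_lintegral_abs_deriv_mul measurableSet_Ici hderiv hinj]
  simp_rw [abs_of_pos (half_pos (exp_pos _))]

theorem lintegral_Ici_one_sq_div_comp_log_sq_div_cube (B : ℝ → ℝ) :
    ∫⁻ t in Ici (1 : ℝ), ENNReal.ofReal (t ^ 2 / B (log (t ^ 2)) / t ^ 3)
      = ENNReal.ofReal (1 / 2) * ∫⁻ u in Ici 0, ENNReal.ofReal (1 / B u) := by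
  rw [lintegral_Ici_one_eq_lintegral_exp_half, ← lintegral_const_mul' _ _ ENNReal.ofReal_ne_top]
  refine setLIntegral_congr_fun measurableSet_Ici fun u _ => ?_
  have hlog : log (exp (u / 2) ^ 2) = u := by rw [← exp_nat_mul, log_exp]; ring
  rw [hlog, ← ENNReal.ofReal_mul (by positivity), ← ENNReal.ofReal_mul (by norm_num)]
  congr 1
  field_simp

theorem lintegral_Ici_div_sq_eq_lintegral_one_div_of_le_iff {A B : ℝ → ℝ}
    (hA : MonotoneOn A (Ici 1)) (hA0 : MapsTo A (Ici 1) (Ici 0)) (hB : MapsTo B (Ici 0) (Ici 1))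
    (hAB : ∀ u ∈ Ici (0 : ℝ), ∀ t ∈ Ici (1 : ℝ), u ≤ A t ↔ B u ≤ t) :
    ∫⁻ t in Ici (1 : ℝ), ENNReal.ofReal (A t / t ^ 2)
      = ∫⁻ u in Ici (0 : ℝ), ENNReal.ofReal (1 / B u) := by
  set μ := (volume.restrict (Ici (1 : ℝ))).withDensity fun t => ENNReal.ofReal (1 / t ^ 2)
  have hAmeas : AEMeasurable A (volume.restrict (Ici 1)) :=
    aemeasurable_restrict_of_monotoneOn measurableSet_Ici hA
  have hlevel : ∀ u ∈ Ici (0 : ℝ), μ {t | u ≤ A t} = ENNReal.ofReal (1 / B u) := fun u hu => by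
    have hset : {t | u ≤ A t} ∩ Ici 1 = Ici (B u) := by
      ext t
      refine ⟨fun ⟨hut, ht⟩ => (hAB u hu t ht).1 hut, fun (ht : B u ≤ t) => ?_⟩
      have ht1 : t ∈ Ici 1 := (hB hu).trans ht
      exact ⟨(hAB u hu t ht1).2 ht, ht1⟩
    rw [withDensity_apply', Measure.restrict_restrict' measurableSet_Ici, hset,
      lintegral_Ici_ofReal_one_div_sq (zero_lt_one.trans_le (hB hu))]
  calc ∫⁻ t in Ici 1, ENNReal.ofReal (A t / t ^ 2) = ∫⁻ t, ENNReal.ofReal (A t) ∂μ := by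
        rw [lintegral_withDensity_eq_lintegral_mul₀ (by fun_prop) hAmeas.ennreal_ofReal]
        refine setLIntegral_congr_fun measurableSet_Ici fun t (ht : 1 ≤ t) => ?_
        rw [Pi.mul_apply, ← ENNReal.ofReal_mul (by positivity), one_div_mul_eq_div]
    _ = ∫⁻ u in Ioi 0, μ {t | u ≤ A t} :=
        lintegral_eq_lintegral_meas_le μ
          ((ae_restrict_of_forall_mem measurableSet_Ici hA0).filter_mono
            (withDensity_absolutelyContinuous _ _).ae_le)
          (hAmeas.mono_ac (withDensity_absolutelyContinuous _ _))
    _ = ∫⁻ u in Ici 0, ENNReal.ofReal (1 / B u) := by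
        rw [Measure.restrict_congr_set Ioi_ae_eq_Ici]
        exact setLIntegral_congr_fun measurableSet_Ici hlevel

theorem almost_linear_iff_almost_quadratic_general
    (𝒜 B : ℝ → ℝ)
    (h𝒜mono : StrictMonoOn 𝒜 (Set.Ici 1))
    (h𝒜bij : Set.BijOn 𝒜 (Set.Ici 1) (Set.Ici 0))
    (hBinv : Set.InvOn B 𝒜 (Set.Ici 1) (Set.Ici 0))
    (P : ℝ → ℝ)
    (hPge : ∀ t : ℝ, 1 ≤ t → P t = t ^ 2 / B (Real.log (t ^ 2))) :
    (∫⁻ t in Set.Ici (1 : ℝ), ENNReal.ofReal (P t / t ^ 3) = ⊤)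
      ↔ (∫⁻ t in Set.Ici (1 : ℝ), ENNReal.ofReal (𝒜 t / t ^ 2) = ⊤) := by
  have hB : MapsTo B (Ici 0) (Ici 1) := hBinv.1.mapsTo h𝒜bij.surjOn
  have hP : ∫⁻ t in Ici (1 : ℝ), ENNReal.ofReal (P t / t ^ 3)
      = ENNReal.ofReal (1 / 2) * ∫⁻ t in Ici 1, ENNReal.ofReal (𝒜 t / t ^ 2) := by
    rw [setLIntegral_congr_fun measurableSet_Ici fun t (ht : 1 ≤ t) => by rw [hPge t ht],
      lintegral_Ici_one_sq_div_comp_log_sq_div_cube,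
      lintegral_Ici_div_sq_eq_lintegral_one_div_of_le_iff h𝒜mono.monotoneOn h𝒜bij.mapsTo hB
        fun u hu t ht => h𝒜mono.le_apply_iff_of_rightInvOn hBinv.2 hB ht hu]
  simp [hP, ENNReal.mul_eq_top]

/-- Let `𝒜 : [1,∞) → [0,∞)` be a strictly increasing continuously
differentiable bijection with `𝒜(1) = 0`, with inverse `B = 𝒜⁻¹ : [0,∞) → [1,∞)`, and define
`P(t) = t²/𝒜⁻¹(log(t²))` for `t ≥ 1`. Then `∫₁^∞ P(t)/t³ dt = ∞` iff `∫₁^∞ 𝒜(t)/t² dt = ∞`. -/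
theorem almost_linear_iff_almost_quadratic
    (𝒜 B : ℝ → ℝ)
    (h𝒜mono : StrictMonoOn 𝒜 (Set.Ici 1))
    (h𝒜smooth : ContDiffOn ℝ 1 𝒜 (Set.Ici 1))
    (h𝒜bij : Set.BijOn 𝒜 (Set.Ici 1) (Set.Ici 0))
    (h𝒜1 : 𝒜 1 = 0)
    (hBinv : Set.InvOn B 𝒜 (Set.Ici 1) (Set.Ici 0))
    (P : ℝ → ℝ)
    (hPge : ∀ t : ℝ, 1 ≤ t → P t = t ^ 2 / B (Real.log (t ^ 2))) :
    (∫⁻ t in Set.Ici (1 : ℝ), ENNReal.ofReal (P t / t ^ 3) = ⊤)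
      ↔ (∫⁻ t in Set.Ici (1 : ℝ), ENNReal.ofReal (𝒜 t / t ^ 2) = ⊤) :=
  almost_linear_iff_almost_quadratic_general 𝒜 B h𝒜mono h𝒜bij hBinv P hPge
end

section
/- Let j ≥ 1 be an integer and q ≥ 0 a real number, and set M_{j,q}(t) = t^j·(log(e + t))^q for t ≥ 0. Then for all real numbers k ≥ 0 and t ≥ 0 one has M_{j,q}(k·t) ≤ 2^q·k^j·(log(e + k))^q·M_{j,q}(t). -/
/-! Since `e + k t ≤ (e + k)(e + t)`, taking logarithms gives
`log (e + k t) ≤ log (e + k) + log (e + t) ≤ 2 log (e + k) log (e + t)`, the last step because both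
logarithms are at least `1`. Raise to the power `q` and multiply by `(k t)^j = k^j t^j`. -/

open Real

lemma add_le_two_mul_mul_of_one_le {a b : ℝ} (ha : 1 ≤ a) (hb : 1 ≤ b) : a + b ≤ 2 * (a * b) := by
  nlinarith [mul_nonneg (sub_nonneg.2 ha) (sub_nonneg.2 hb)]

lemma one_le_log_exp_one_add {x : ℝ} (hx : 0 ≤ x) : 1 ≤ log (exp 1 + x) := by
  simpa using log_le_log (exp_pos 1) (le_add_of_nonneg_right hx)

lemma exp_one_add_mul_le {k t : ℝ} (hk : 0 ≤ k) (ht : 0 ≤ t) :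
    exp 1 + k * t ≤ (exp 1 + k) * (exp 1 + t) := by
  have he : 1 ≤ exp 1 := one_le_exp zero_le_one
  nlinarith [mul_nonneg (exp_pos 1).le hk, mul_nonneg (exp_pos 1).le ht]

lemma log_exp_one_add_mul_le {k t : ℝ} (hk : 0 ≤ k) (ht : 0 ≤ t) :
    log (exp 1 + k * t) ≤ 2 * (log (exp 1 + k) * log (exp 1 + t)) :=
  calc log (exp 1 + k * t)
      ≤ log ((exp 1 + k) * (exp 1 + t)) :=
        log_le_log (by positivity) (exp_one_add_mul_le hk ht)
    _ = log (exp 1 + k) + log (exp 1 + t) := log_mul (by positivity) (by positivity)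
    _ ≤ 2 * (log (exp 1 + k) * log (exp 1 + t)) :=
        add_le_two_mul_mul_of_one_le (one_le_log_exp_one_add hk) (one_le_log_exp_one_add ht)

lemma log_exp_one_add_mul_rpow_le {q k t : ℝ} (hq : 0 ≤ q) (hk : 0 ≤ k) (ht : 0 ≤ t) :
    log (exp 1 + k * t) ^ q ≤ 2 ^ q * log (exp 1 + k) ^ q * log (exp 1 + t) ^ q := by
  have hlog_k := zero_le_one.trans (one_le_log_exp_one_add hk)
  have hlog_t := zero_le_one.trans (one_le_log_exp_one_add ht)
  calc log (exp 1 + k * t) ^ q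
      ≤ (2 * (log (exp 1 + k) * log (exp 1 + t))) ^ q :=
        rpow_le_rpow (zero_le_one.trans (one_le_log_exp_one_add (mul_nonneg hk ht)))
          (log_exp_one_add_mul_le hk ht) hq
    _ = 2 ^ q * log (exp 1 + k) ^ q * log (exp 1 + t) ^ q := by
        rw [mul_rpow zero_le_two (mul_nonneg hlog_k hlog_t), mul_rpow hlog_k hlog_t, mul_assoc]

theorem orlicz_gauge_scaling_general
    (j : ℕ) (q : ℝ) (hq : 0 ≤ q)
    (M : ℝ → ℝ)
    (hM : ∀ t : ℝ, 0 ≤ t → M t = t ^ j * Real.log (Real.exp 1 + t) ^ q)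
    (k t : ℝ) (hk : 0 ≤ k) (ht : 0 ≤ t) :
    M (k * t) ≤ 2 ^ q * k ^ j * Real.log (Real.exp 1 + k) ^ q * M t := by
  rw [hM _ (mul_nonneg hk ht), hM _ ht]
  calc (k * t) ^ j * log (exp 1 + k * t) ^ q
      ≤ (k * t) ^ j * (2 ^ q * log (exp 1 + k) ^ q * log (exp 1 + t) ^ q) :=
        mul_le_mul_of_nonneg_left (log_exp_one_add_mul_rpow_le hq hk ht) (by positivity)
    _ = 2 ^ q * k ^ j * log (exp 1 + k) ^ q * (t ^ j * log (exp 1 + t) ^ q) := by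
        rw [mul_pow]; ring

/-- Let `j ≥ 1` be an integer and `q ≥ 0` a real number, and set
`M_{j,q}(t) = t^j·(log(e + t))^q` for `t ≥ 0`. Then for all reals `k ≥ 0` and `t ≥ 0` one has
`M_{j,q}(k·t) ≤ 2^q·k^j·(log(e + k))^q·M_{j,q}(t)`. -/
theorem orlicz_gauge_scaling
    (j : ℕ) (hj : 1 ≤ j) (q : ℝ) (hq : 0 ≤ q)
    (M : ℝ → ℝ)
    (hM : ∀ t : ℝ, 0 ≤ t → M t = t ^ j * Real.log (Real.exp 1 + t) ^ q)
    (k t : ℝ) (hk : 0 ≤ k) (ht : 0 ≤ t) :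
    M (k * t) ≤ 2 ^ q * k ^ j * Real.log (Real.exp 1 + k) ^ q * M t :=
  orlicz_gauge_scaling_general j q hq M hM k t hk ht
end

section
/- Let K be a compact subset of the open disc B(0,2) ⊂ ℂ such that the frontier of K contains at least two distinct points and the frontier of K is contained in the closure of closedBall(0,2) \ K. Then there is no function G : ℂ → ℂ that is continuous on closedBall(0,2) and satisfies G(closedBall(0,2) \ {0}) = closedBall(0,2) \ K (image of the punctured closed disc equals the closed disc minus K). -/
/-! If such a `G` existed, the compact image `G '' closedBall 0 2` would be
`insert (G 0) (closedBall 0 2 \ K)`, a closed set. Every frontier point of `K` lies in the closure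
of `closedBall 0 2 \ K` but not in that set, so it must be `G 0`; hence `K` has at most one
frontier point. -/

open Set Metric

theorem image_eq_insert_image_diff_singleton {α β : Type*} (f : α → β) {s : Set α} {x : α}
    (hx : x ∈ s) : f '' s = insert (f x) (f '' (s \ {x})) := by
  rw [← image_insert_eq, insert_sdiff_singleton, insert_eq_of_mem hx]

theorem frontier_subset_singleton_of_isClosed_insert {X : Type*} [TopologicalSpace X]
    {K T : Set X} {p : X} (hK : IsClosed K) (hfront : frontier K ⊆ closure (T \ K))
    (hclosed : IsClosed (insert p (T \ K))) : frontier K ⊆ {p} := by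
  intro x hx
  have hxK : x ∈ K := hK.frontier_subset hx
  rcases closure_minimal (subset_insert p _) hclosed (hfront hx) with h | h
  · exact h
  · exact absurd hxK h.2

theorem no_continuous_cloaking_extension_general
    (K : Set ℂ) (hKcomp : IsCompact K)
    (hfront : ∃ a ∈ frontier K, ∃ b ∈ frontier K, a ≠ b)
    (hfront2 : frontier K ⊆ closure (Metric.closedBall (0 : ℂ) 2 \ K)) :
    ¬ ∃ G : ℂ → ℂ, ContinuousOn G (Metric.closedBall (0 : ℂ) 2) ∧
        G '' (Metric.closedBall (0 : ℂ) 2 \ {0}) = Metric.closedBall (0 : ℂ) 2 \ K := by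
  rintro ⟨G, hGc, hGim⟩
  have himage : G '' closedBall 0 2 = insert (G 0) (closedBall 0 2 \ K) := by
    rw [image_eq_insert_image_diff_singleton G (mem_closedBall_self zero_le_two), hGim]
  have hclosed : IsClosed (insert (G 0) (closedBall (0 : ℂ) 2 \ K)) :=
    himage ▸ ((isCompact_closedBall 0 2).image_of_continuousOn hGc).isClosed
  have hsub := frontier_subset_singleton_of_isClosed_insert hKcomp.isClosed hfront2 hclosed
  obtain ⟨a, ha, b, hb, hab⟩ := hfront
  exact hab (subsingleton_singleton.anti hsub ha hb)

/-- topological contradiction concluding the proof of Theorem 1.6(ii).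
Let `K` be a compact subset of the open disc `B(0,2) ⊂ ℂ` whose frontier contains at least
two distinct points and whose frontier is contained in the closure of
`closedBall(0,2) \ K`. Then there is no `G : ℂ → ℂ` continuous on `closedBall(0,2)` with
`G(closedBall(0,2) \ {0}) = closedBall(0,2) \ K`. -/
theorem no_continuous_cloaking_extension
    (K : Set ℂ) (hKcomp : IsCompact K) (hKsub : K ⊆ Metric.ball (0 : ℂ) 2)
    (hfront : ∃ a ∈ frontier K, ∃ b ∈ frontier K, a ≠ b)
    (hfront2 : frontier K ⊆ closure (Metric.closedBall (0 : ℂ) 2 \ K)) :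
    ¬ ∃ G : ℂ → ℂ, ContinuousOn G (Metric.closedBall (0 : ℂ) 2) ∧
        G '' (Metric.closedBall (0 : ℂ) 2 \ {0}) = Metric.closedBall (0 : ℂ) 2 \ K :=
  no_continuous_cloaking_extension_general K hKcomp hfront hfront2
end

section
/- Let ρ : ℝ → ℝ, let x ∈ ℝ² (with the Euclidean norm) with x ≠ 0, set r = ‖x‖, and assume ρ is differentiable at r with derivative ρ'(r). Define F(y) = (ρ(‖y‖)/‖y‖) • y for y ≠ 0 (and arbitrarily at 0). Then F is differentiable at x, its Fréchet derivative at x is the linear map v ↦ (ρ(r)/r)·(v − (⟨x,v⟩/r²) • x) + ρ'(r)·(⟨x,v⟩/r²) • x, and the operator norm of this derivative equals max(|ρ(r)|/r, |ρ'(r)|). -/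
/-!
With `φ t = ρ t / t`, the map is `y ↦ φ ‖y‖ • y`, and the product and chain rules with
`D‖·‖(x) = ⟪x, ·⟫ / ‖x‖` give `DF(x) = φ(r) • id + (φ'(r) / r) ⟪x, ·⟫ • x`, which is `φ(r)` on `xᗮ`
and `φ(r) + r φ'(r) = ρ'(r)` on `ℝ x`. An operator acting as the scalars `a` and `b` on a pair of
nonzero complementary orthogonal subspaces has norm `max |a| |b|`: Pythagoras gives the upper
bound and a nonzero vector of either subspace the lower one. In `ℝ²` both `ℝ x` and `xᗮ` are
nonzero.
-/

open scoped RealInnerProductSpace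

open Module in
theorem Submodule.span_singleton_ne_top_of_one_lt_finrank {K V : Type*} [DivisionRing K]
    [AddCommGroup V] [Module K V] (h : 1 < finrank K V) (v : V) : (K ∙ v) ≠ ⊤ := by
  intro htop
  have hle := finrank_span_le_card (R := K) ({v} : Set V)
  rw [htop, finrank_top] at hle
  simp only [Set.toFinset_singleton, Finset.card_singleton] at hle
  omega

theorem ContinuousLinearMap.norm_le_opNorm_of_apply_eq_smul {𝕜 F : Type*}
    [NontriviallyNormedField 𝕜] [NormedAddCommGroup F] [NormedSpace 𝕜 F]
    (T : F →L[𝕜] F) {c : 𝕜} {u : F} (hu : u ≠ 0) (h : T u = c • u) : ‖c‖ ≤ ‖T‖ := by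
  have h' := T.le_opNorm u
  rw [h, norm_smul] at h'
  exact le_of_mul_le_mul_right h' (norm_pos_iff.mpr hu)

section

variable {E : Type*} [NormedAddCommGroup E] [InnerProductSpace ℝ E]

theorem hasFDerivAt_norm_of_ne_zero {x : E} (hx : x ≠ 0) :
    HasFDerivAt (fun y : E => ‖y‖) (‖x‖⁻¹ • innerSL ℝ x) x := by
  have h := ((hasStrictFDerivAt_norm_sq x).hasFDerivAt).sqrt (by positivity)
  simp only [Real.sqrt_sq (norm_nonneg _)] at h
  convert h using 1
  ext v
  simp only [smul_apply, coe_innerSL_apply, smul_eq_mul, one_div, mul_inv_rev, nsmul_eq_mul,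
    Nat.cast_ofNat]
  field_simp

theorem hasFDerivAt_radial {ρ : ℝ → ℝ} {ρ' : ℝ} {x : E} (hx : x ≠ 0)
    (hρ : HasDerivAt ρ ρ' ‖x‖) :
    HasFDerivAt (fun y : E => (ρ ‖y‖ / ‖y‖) • y)
      ((ρ ‖x‖ / ‖x‖) • (ContinuousLinearMap.id ℝ E - (ℝ ∙ x).starProjection)
        + ρ' • (ℝ ∙ x).starProjection) x := by
  have hr : ‖x‖ ≠ 0 := norm_ne_zero_iff.mpr hx
  have hφ : HasDerivAt (fun t => ρ t / t) ((ρ' * ‖x‖ - ρ ‖x‖ * 1) / ‖x‖ ^ 2) ‖x‖ :=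
    hρ.div (hasDerivAt_id' _) hr
  have hc : HasFDerivAt (fun y : E => ρ ‖y‖ / ‖y‖)
      (((ρ' * ‖x‖ - ρ ‖x‖ * 1) / ‖x‖ ^ 2) • ‖x‖⁻¹ • innerSL ℝ x) x :=
    hφ.comp_hasFDerivAt x (hasFDerivAt_norm_of_ne_zero hx)
  refine (hc.smul (hasFDerivAt_id x)).congr_fderiv ?_
  ext v
  simp only [mul_one, id_eq, add_apply, smul_apply, ContinuousLinearMap.id_apply,
    ContinuousLinearMap.smulRight_apply, coe_innerSL_apply, smul_eq_mul, sub_apply,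
    Submodule.starProjection_singleton, Real.ringHom_apply]
  match_scalars
  · ring
  · field_simp
    ring

namespace Submodule

variable (K : Submodule ℝ E) [K.HasOrthogonalProjection]

theorem norm_smul_starProjection_orthogonal_add_smul_starProjection_le (a b : ℝ) :
    ‖a • Kᗮ.starProjection + b • K.starProjection‖ ≤ max |a| |b| := by
  set M := max |a| |b|
  have hM : 0 ≤ M := le_max_of_le_left (abs_nonneg a)
  refine ContinuousLinearMap.opNorm_le_bound _ hM fun v => ?_
  set p := K.starProjection v
  set q := Kᗮ.starProjection v
  have hqp : ⟪q, p⟫ = 0 :=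
    K.inner_left_of_mem_orthogonal (K.starProjection_apply_mem v) (Kᗮ.starProjection_apply_mem v)
  have hv : ‖v‖ ^ 2 = ‖p‖ ^ 2 + ‖q‖ ^ 2 := K.norm_sq_eq_add_norm_sq_starProjection v
  have hTv : ‖a • q + b • p‖ ^ 2 = a ^ 2 * ‖q‖ ^ 2 + b ^ 2 * ‖p‖ ^ 2 := by
    rw [norm_add_sq_real, real_inner_smul_left, real_inner_smul_right, hqp, norm_smul, norm_smul,
      Real.norm_eq_abs, Real.norm_eq_abs, mul_pow, mul_pow, sq_abs, sq_abs]
    ring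
  have ha : a ^ 2 ≤ M ^ 2 := sq_abs a ▸ pow_le_pow_left₀ (abs_nonneg a) (le_max_left _ _) 2
  have hb : b ^ 2 ≤ M ^ 2 := sq_abs b ▸ pow_le_pow_left₀ (abs_nonneg b) (le_max_right _ _) 2
  refine le_of_pow_le_pow_left₀ two_ne_zero (by positivity) ?_
  calc ‖a • q + b • p‖ ^ 2 = a ^ 2 * ‖q‖ ^ 2 + b ^ 2 * ‖p‖ ^ 2 := hTv
    _ ≤ M ^ 2 * ‖q‖ ^ 2 + M ^ 2 * ‖p‖ ^ 2 := by gcongr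
    _ = (M * ‖v‖) ^ 2 := by rw [mul_pow, hv]; ring

theorem norm_smul_starProjection_orthogonal_add_smul_starProjection (hK : K ≠ ⊥) (hK' : K ≠ ⊤)
    (a b : ℝ) : ‖a • Kᗮ.starProjection + b • K.starProjection‖ = max |a| |b| := by
  refine le_antisymm (K.norm_smul_starProjection_orthogonal_add_smul_starProjection_le a b)
    (max_le ?_ ?_)
  all_goals rw [← Real.norm_eq_abs]
  · obtain ⟨w, hw, hw0⟩ := exists_mem_ne_zero_of_ne_bot (K.orthogonal_eq_bot_iff.not.mpr hK')
    refine ContinuousLinearMap.norm_le_opNorm_of_apply_eq_smul _ hw0 ?_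
    have hKw : K.starProjection w = 0 := by
      have h := K.starProjection_orthogonal_val w
      rw [starProjection_eq_self_iff.mpr hw] at h
      exact sub_eq_self.mp h.symm
    simp [starProjection_eq_self_iff.mpr hw, hKw]
  · obtain ⟨u, hu, hu0⟩ := exists_mem_ne_zero_of_ne_bot hK
    refine ContinuousLinearMap.norm_le_opNorm_of_apply_eq_smul _ hu0 ?_
    simp [starProjection_eq_self_iff.mpr hu, starProjection_orthogonal_apply_eq_zero hu]

end Submodule
end

/-- Let `ρ : ℝ → ℝ`, let `x ∈ ℝ²` with `x ≠ 0`, set `r = ‖x‖`, and assume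
`ρ` is differentiable at `r` with derivative `ρ'`. Define `F(y) = (ρ(‖y‖)/‖y‖) • y` for
`y ≠ 0` (and arbitrarily at `0`). Then `F` is differentiable at `x`, its Fréchet derivative
at `x` is the linear map `v ↦ (ρ(r)/r)·(v − (⟨x,v⟩/r²) • x) + ρ'(r)·(⟨x,v⟩/r²) • x`, and the
operator norm of this derivative equals `max(|ρ(r)|/r, |ρ'(r)|)`. -/
theorem radial_map_fderiv
    (ρ : ℝ → ℝ) (ρ' : ℝ)
    (x : EuclideanSpace ℝ (Fin 2)) (hx : x ≠ 0)
    (r : ℝ) (hr : r = ‖x‖)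
    (hρ : HasDerivAt ρ ρ' r)
    (F : EuclideanSpace ℝ (Fin 2) → EuclideanSpace ℝ (Fin 2))
    (hF : ∀ y : EuclideanSpace ℝ (Fin 2), y ≠ 0 → F y = (ρ ‖y‖ / ‖y‖) • y)
    (proj T : EuclideanSpace ℝ (Fin 2) →L[ℝ] EuclideanSpace ℝ (Fin 2))
    (hproj : ∀ v, proj v = (⟪x, v⟫ / r ^ 2) • x)
    (hT : T = (ρ r / r) • (ContinuousLinearMap.id ℝ (EuclideanSpace ℝ (Fin 2)) - proj)
        + ρ' • proj) :
    HasFDerivAt F T x ∧ ‖T‖ = max (|ρ r| / r) |ρ'| := by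
  subst hr
  obtain rfl : proj = (ℝ ∙ x).starProjection :=
    ContinuousLinearMap.ext fun v => by simp [hproj, Submodule.starProjection_singleton]
  subst hT
  refine ⟨(hasFDerivAt_radial hx hρ).congr_of_eventuallyEq ?_, ?_⟩
  · filter_upwards [compl_singleton_mem_nhds hx] with y hy using hF y hy
  · have hbot : (ℝ ∙ x) ≠ ⊥ := by simpa using hx
    have htop : (ℝ ∙ x) ≠ ⊤ := Submodule.span_singleton_ne_top_of_one_lt_finrank (by simp) x
    rw [← Submodule.starProjection_orthogonal,
      Submodule.norm_smul_starProjection_orthogonal_add_smul_starProjection _ hbot htop,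
      abs_div, abs_norm]
end

section
/- Define g : ℝ² → ℝ by g(y) = ‖y‖/(‖y‖−1) + (‖y‖−1)/‖y‖ if 1 < ‖y‖ < 2 and g(y) = 0 otherwise. Then: (a) ∫_{ℝ²} g dm = ∞ (g is not Lebesgue integrable); and (b) there is a constant C > 0 such that λ · m({y ∈ ℝ² : g(y) > λ}) ≤ C for every λ > 0 (g belongs to weak-L¹). -/
/-!
The function `g` is radial, `g y = G ‖y‖`, and on `1 < r < 2` its profile satisfies
`(r - 1)⁻¹ ≤ G r ≤ 3 / (r - 1)`. In polar coordinates `∫ g = 2π ∫ r G(r) dr`, and the lower bound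
makes this diverge logarithmically at `r = 1`. The upper bound confines `{g > λ}` to the thin
annulus `1 < ‖y‖ < 1 + 3 / λ`, whose area is `O(1 / λ)`.
-/

open MeasureTheory Set Metric Real

theorem EuclideanSpace.volume_annulus_fin_two {a b : ℝ} (ha : 0 ≤ a) (hab : a < b) :
    volume {y : EuclideanSpace ℝ (Fin 2) | a < ‖y‖ ∧ ‖y‖ < b} =
      ENNReal.ofReal (π * (b ^ 2 - a ^ 2)) := by
  have hset : {y : EuclideanSpace ℝ (Fin 2) | a < ‖y‖ ∧ ‖y‖ < b} = ball 0 b \ closedBall 0 a := by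
    ext y
    simp [and_comm]
  rw [hset, measure_sdiff (closedBall_subset_ball hab)
    measurableSet_closedBall.nullMeasurableSet measure_closedBall_lt_top.ne,
    volume_ball_fin_two, volume_closedBall_fin_two, ← ENNReal.ofReal_pow ha,
    ← ENNReal.ofReal_pow (ha.trans hab.le), ← ENNReal.ofReal_mul (by positivity),
    ← ENNReal.ofReal_mul (by positivity), ← ENNReal.ofReal_sub _ (by positivity)]
  ring_nf

theorem not_integrable_comp_norm_of_inv_sub_le {E : Type*} [NormedAddCommGroup E]
    [NormedSpace ℝ E] [Nontrivial E] [FiniteDimensional ℝ E] [MeasurableSpace E] [BorelSpace E]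
    (μ : Measure E) [μ.IsAddHaarMeasure] {f : ℝ → ℝ} {a b : ℝ} (ha : 0 < a) (hab : a < b)
    (hf : ∀ r ∈ Ioo a b, (r - a)⁻¹ ≤ f r) :
    ¬ Integrable (fun x => f ‖x‖) μ := by
  intro hint
  set k := Module.finrank ℝ E - 1
  have hmajorant : IntegrableOn (fun r => r ^ k * f r) (Ioo a b) :=
    ((integrable_fun_norm_addHaar μ).1 hint).mono_set
      (Ioo_subset_Ioi_self.trans (Ioi_subset_Ioi ha.le))
  have hminorant : IntegrableOn (fun r => a ^ k * (r - a)⁻¹) (Ioo a b) := by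
    refine hmajorant.mono' (by fun_prop)
      (ae_restrict_of_forall_mem measurableSet_Ioo fun r hr => ?_)
    have hpos : 0 < (r - a)⁻¹ := inv_pos.2 (sub_pos.2 hr.1)
    rw [Real.norm_of_nonneg (by positivity)]
    exact mul_le_mul (pow_le_pow_left₀ ha.le hr.1.le k) (hf r hr) hpos.le
      (pow_pos (ha.trans hr.1) k).le
  have : IntervalIntegrable (fun r => (r - a)⁻¹) volume a b := by
    rw [intervalIntegrable_iff_integrableOn_Ioo_of_le hab.le, IntegrableOn]
    simpa [← mul_assoc, (pow_pos ha k).ne'] using hminorant.const_mul (a ^ k)⁻¹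
  simp [intervalIntegrable_sub_inv_iff, hab.ne] at this

theorem ofReal_mul_volume_lt_comp_norm_le {f : ℝ → ℝ} {a b c : ℝ} (ha : 0 ≤ a) (hab : a < b)
    (hc : 0 < c) (hf_zero : ∀ r ∉ Ioo a b, f r ≤ 0) (hf_le : ∀ r ∈ Ioo a b, f r ≤ c / (r - a))
    {l : ℝ} (hl : 0 < l) :
    ENNReal.ofReal l * volume {y : EuclideanSpace ℝ (Fin 2) | l < f ‖y‖} ≤
      ENNReal.ofReal (2 * π * b * c) := by
  set m := min b (a + c / l)
  have ham : a < m := lt_min hab (lt_add_of_pos_right a (div_pos hc hl))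
  have hsub : {y : EuclideanSpace ℝ (Fin 2) | l < f ‖y‖} ⊆ {y | a < ‖y‖ ∧ ‖y‖ < m} := by
    intro y (hy : l < f ‖y‖)
    have hr : ‖y‖ ∈ Ioo a b := by
      by_contra h
      linarith [hf_zero _ h]
    refine ⟨hr.1, lt_min hr.2 ?_⟩
    have : l * (‖y‖ - a) < c := (lt_div_iff₀ (sub_pos.2 hr.1)).1 (hy.trans_le (hf_le _ hr))
    rw [← sub_lt_iff_lt_add', lt_div_iff₀ hl]
    linarith
  have hlm : l * (m - a) ≤ c := by
    rw [← le_div_iff₀' hl]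
    linarith [min_le_right b (a + c / l)]
  calc ENNReal.ofReal l * volume {y : EuclideanSpace ℝ (Fin 2) | l < f ‖y‖}
      ≤ ENNReal.ofReal l * ENNReal.ofReal (π * (m ^ 2 - a ^ 2)) := by
        gcongr
        exact (measure_mono hsub).trans_eq (EuclideanSpace.volume_annulus_fin_two ha ham)
    _ = ENNReal.ofReal (π * (l * (m - a) * (m + a))) := by
        rw [← ENNReal.ofReal_mul hl.le]
        ring_nf
    _ ≤ ENNReal.ofReal (2 * π * b * c) := by
        apply ENNReal.ofReal_le_ofReal
        have : m + a ≤ 2 * b := by linarith [min_le_left b (a + c / l)]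
        have : l * (m - a) * (m + a) ≤ c * (2 * b) :=
          mul_le_mul hlm this (by linarith) hc.le
        nlinarith [pi_pos]

noncomputable def cloakingTraceProfile (r : ℝ) : ℝ :=
  if 1 < r ∧ r < 2 then r / (r - 1) + (r - 1) / r else 0

theorem measurable_cloakingTraceProfile : Measurable cloakingTraceProfile :=
  Measurable.ite (measurableSet_Ioo (a := (1 : ℝ)) (b := 2)) (by fun_prop) measurable_const

theorem cloakingTraceProfile_of_notMem {r : ℝ} (hr : r ∉ Ioo 1 2) :
    cloakingTraceProfile r = 0 :=
  if_neg hr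

theorem cloakingTraceProfile_of_mem {r : ℝ} (hr : r ∈ Ioo 1 2) :
    cloakingTraceProfile r = r / (r - 1) + (r - 1) / r :=
  if_pos hr

theorem inv_sub_one_le_cloakingTraceProfile {r : ℝ} (hr : r ∈ Ioo 1 2) :
    (r - 1)⁻¹ ≤ cloakingTraceProfile r := by
  have h : 0 < r - 1 := sub_pos.2 hr.1
  rw [cloakingTraceProfile_of_mem hr, inv_eq_one_div]
  have : 0 ≤ (r - 1) / r := div_nonneg h.le (by linarith [hr.1])
  linarith [div_le_div_of_nonneg_right hr.1.le h.le]

theorem cloakingTraceProfile_le {r : ℝ} (hr : r ∈ Ioo 1 2) :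
    cloakingTraceProfile r ≤ 3 / (r - 1) := by
  have h : 0 < r - 1 := sub_pos.2 hr.1
  rw [cloakingTraceProfile_of_mem hr]
  calc r / (r - 1) + (r - 1) / r ≤ 2 / (r - 1) + 1 / (r - 1) := by
        gcongr <;> linarith [hr.2]
    _ = 3 / (r - 1) := by ring

theorem cloakingTraceProfile_nonneg (r : ℝ) : 0 ≤ cloakingTraceProfile r := by
  by_cases hr : r ∈ Ioo 1 2
  · exact (inv_pos.2 (sub_pos.2 hr.1)).le.trans (inv_sub_one_le_cloakingTraceProfile hr)
  · exact (cloakingTraceProfile_of_notMem hr).ge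

/-- formulas (1.17) and (1.18): the borderline of invisibility.
Define `g : ℝ² → ℝ` by `g(y) = ‖y‖/(‖y‖−1) + (‖y‖−1)/‖y‖` if `1 < ‖y‖ < 2` and `g(y) = 0`
otherwise. Then (a) `∫_{ℝ²} g dm = ∞`, and (b) there is `C > 0` with
`λ·m({g > λ}) ≤ C` for every `λ > 0` (i.e. `g` belongs to weak-`L¹`). -/
theorem cloaking_trace_weak_L1_not_L1
    (g : EuclideanSpace ℝ (Fin 2) → ℝ)
    (hg : ∀ y : EuclideanSpace ℝ (Fin 2),
      g y = if 1 < ‖y‖ ∧ ‖y‖ < 2 then ‖y‖ / (‖y‖ - 1) + (‖y‖ - 1) / ‖y‖ else 0) :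
    (∫⁻ y : EuclideanSpace ℝ (Fin 2), ENNReal.ofReal (g y) = ⊤) ∧
    ∃ C : ℝ, 0 < C ∧ ∀ l : ℝ, 0 < l →
      ENNReal.ofReal l * volume {y : EuclideanSpace ℝ (Fin 2) | l < g y}
        ≤ ENNReal.ofReal C := by
  obtain rfl : g = fun y => cloakingTraceProfile ‖y‖ := funext hg
  refine ⟨?_, 2 * π * 2 * 3, by positivity, fun l hl => ?_⟩
  · by_contra hfinite
    refine not_integrable_comp_norm_of_inv_sub_le (E := EuclideanSpace ℝ (Fin 2)) volume
      one_pos one_lt_two (fun r hr => inv_sub_one_le_cloakingTraceProfile hr) ?_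
    exact (lintegral_ofReal_ne_top_iff_integrable
      (measurable_cloakingTraceProfile.comp measurable_norm).aestronglyMeasurable
      (.of_forall fun y => cloakingTraceProfile_nonneg ‖y‖)).1 hfinite
  · exact ofReal_mul_volume_lt_comp_norm_le zero_le_one one_lt_two three_pos
      (fun r hr => (cloakingTraceProfile_of_notMem hr).le) (fun r hr => cloakingTraceProfile_le hr)
      hl
end
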